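/- Let K be an ordered field, ]⁻0,1⁺[ = {x ∈ K | 0 ⪅ x ⪅ 1}, and 1⁺ = {x ∈ K | x > 1 and x ≈ 1}. Then for all a, b ∈ ]⁻0,1⁺[ and all c ∈ 1⁺ ∪ {1}, the element c - a + ab belongs to ]⁻0,1⁺[. -/

import Mathlib

variable {K : Type*} [Field K] [LinearOrder K] [IsStrictOrderedRing K]

def Infinitesimal (x : K) : Prop := ∀ q : ℚ, 0 < q → |x| ≤ (q : K)

def InfClose (x y : K) : Prop := Infinitesimal (x - y)

def RoughLE (x y : K) : Prop := x < y ∨ InfClose x y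

def NSUnitInterval (K : Type*) [Field K] [LinearOrder K] [IsStrictOrderedRing K] : Set K :=
  {x : K | RoughLE 0 x ∧ RoughLE x 1}

/-! `x ⪅ y` means `x ≤ y + q` for every positive rational `q`, so everything
reduces to the exact estimate that `c - a + a * b = c - a * (1 - b)` lies within `3 r` of `[0, 1]`
whenever `a`, `b` lie within `r ≤ 1` of `[0, 1]` and `1 ≤ c ≤ 1 + r`. -/

open Set

lemma roughLE_iff {x y : K} : RoughLE x y ↔ ∀ q : ℚ, 0 < q → x ≤ y + q := by
  constructor
  · rintro (hlt | hclose) q hq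
    · have : (0 : K) < q := by exact_mod_cast hq
      linarith
    · linarith [(abs_le.mp (hclose q hq)).2]
  · intro h
    refine or_iff_not_imp_left.mpr fun hlt q hq => ?_
    rw [abs_of_nonneg (sub_nonneg.mpr (not_lt.mp hlt))]
    linarith [h q hq]

lemma mem_nsUnitInterval_iff {x : K} :
    x ∈ NSUnitInterval K ↔ ∀ q : ℚ, 0 < q → x ∈ Icc (-(q : K)) (1 + q) := by
  simp only [NSUnitInterval, mem_ofPred_eq, roughLE_iff, mem_Icc, imp_and, forall_and,
    neg_le_iff_add_nonneg]

lemma mem_Icc_of_infClose_one_of_one_le {c : K} (h₁ : 1 ≤ c) (hc : InfClose c 1)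
    {q : ℚ} (hq : 0 < q) : c ∈ Icc 1 (1 + (q : K)) :=
  ⟨h₁, by linarith [(abs_le.mp (hc q hq)).2]⟩

lemma sub_add_mul_mem_Icc_of_near_unitInterval {a b c r : K} (hr₀ : 0 ≤ r) (hr₁ : r ≤ 1)
    (ha : a ∈ Icc (-r) (1 + r)) (hb : b ∈ Icc (-r) (1 + r)) (hc : c ∈ Icc 1 (1 + r)) :
    c - a + a * b ∈ Icc (-(3 * r)) (1 + 3 * r) := by
  obtain ⟨ha₀, ha₁⟩ := ha
  obtain ⟨hb₀, hb₁⟩ := hb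
  obtain ⟨hc₀, hc₁⟩ := hc
  have hprod_le : a * (1 - b) ≤ (1 + r) ^ 2 := by
    nlinarith [mul_nonneg (by linarith : (0 : K) ≤ 1 + r - a) (by linarith : (0 : K) ≤ r + b),
      mul_nonneg (by linarith : (0 : K) ≤ a + r) (by linarith : (0 : K) ≤ 1 + r - b)]
  have hprod_ge : -(r * (1 + r)) ≤ a * (1 - b) := by
    rcases le_total 0 a with ha | ha
    · nlinarith [mul_nonneg ha (by linarith : (0 : K) ≤ 1 - b + r)]
    · nlinarith [mul_nonneg_of_nonpos_of_nonpos ha (by linarith : 1 - b - (1 + r) ≤ (0 : K))]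
  constructor <;> nlinarith

theorem nsui_impl_closed (a b c : K)
    (ha : a ∈ NSUnitInterval K) (hb : b ∈ NSUnitInterval K)
    (hc : c ∈ {x : K | 1 < x ∧ InfClose x 1} ∪ {1}) :
    c - a + a * b ∈ NSUnitInterval K := by
  rw [mem_nsUnitInterval_iff] at ha hb ⊢
  intro q hq
  set r : ℚ := min (q / 3) 1
  have hr : 0 < r := lt_min (by linarith) one_pos
  have hc' : c ∈ Icc 1 (1 + (r : K)) := by
    rcases hc with ⟨hc₁, hclose⟩ | rfl
    · exact mem_Icc_of_infClose_one_of_one_le hc₁.le hclose hr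
    · exact ⟨le_rfl, le_add_of_nonneg_right (by exact_mod_cast hr.le)⟩
  have hr₃ : 3 * (r : K) ≤ q := by exact_mod_cast (le_div_iff₀' three_pos).mp (min_le_left _ _)
  have hmem := sub_add_mul_mem_Icc_of_near_unitInterval (by exact_mod_cast hr.le)
    (by exact_mod_cast min_le_right _ _) (ha r hr) (hb r hr) hc'
  exact Icc_subset_Icc (by linarith) (by linarith) hmem
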